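/- Let μ be a map from the vertices of a gene tree T to vertices and edges of a species tree S satisfying (M1) and (M3). Then for every vertex u of T, μ(u) is greater than or equal to lca_S(σ(L_{T_E'}(u))) in the ancestor order of S (extended to edges). -/
import Mathlib


/-- A rooted tree on vertex type `V`, encoded by a parent map.
Edges are directed away from the root; the edge into a non-root vertex `v`
is `(par v, v)`. -/
structure RTree (V : Type*) where
  root : V
  par : V → V
  par_root : par root = root
  par_ne : ∀ v, v ≠ root → par v ≠ v
  reaches : ∀ v, ∃ k, par^[k] v = root

namespace RTree

variable {V : Type*}

/-- `anc T x y` : `x` is a descendant of `y`, i.e. `x ⪯_T y`. -/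
def anc (T : RTree V) (x y : V) : Prop := ∃ k, (T.par)^[k] x = y

/-- strict descendant: `x ≺_T y`. -/
def sanc (T : RTree V) (x y : V) : Prop := T.anc x y ∧ x ≠ y

def IsLeaf (T : RTree V) (v : V) : Prop := ∀ u, T.par u = v → u = v

/-- `x` is a least common ancestor of the set `A`. -/
def IsLca (T : RTree V) (A : Set V) (x : V) : Prop :=
  (∀ a ∈ A, T.anc a x) ∧ ∀ y, (∀ a ∈ A, T.anc a y) → T.anc x y

/-- A time map: strict descendants have strictly larger time stamps. -/
def IsTimeMap (T : RTree V) (τ : V → ℝ) : Prop :=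
  ∀ x y, T.sanc x y → τ y < τ x

end RTree

/-- Event labels: speciation `•`, duplication `□`, HGT `△`, leaf `⊙`. -/
inductive Event where
  | spec | dup | hgt | leaf
deriving DecidableEq

/-- The common setup: a gene tree `T` (vertices `V`) with event labels `t`,
transfer edges `trans` (an edge is recorded by its child endpoint),
a species tree `S` (vertices `W`), the map `sig = σ` assigning to each gene
(leaf of `T`) the species (leaf of `S`) it resides in, and a least common
ancestor function `lca` on the species tree. -/
structure ReconSetup (V W : Type*) where
  T : RTree V
  S : RTree W
  t : V → Event
  trans : Set V
  sig : V → W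
  lca : Set W → W
  trans_ne_root : ∀ v ∈ trans, v ≠ T.root
  trans_hgt : ∀ v ∈ trans, t (T.par v) = Event.hgt
  leaf_iff : ∀ v, T.IsLeaf v ↔ t v = Event.leaf
  sig_leaf : ∀ v, T.IsLeaf v → S.IsLeaf (sig v)
  lca_spec : ∀ A : Set W, A.Nonempty → S.IsLca A (lca A)

/-- lower endpoint of a vertex-or-edge of the species tree
(an edge `(S.par y, y)` is encoded as `Sum.inr y`; a vertex `x` as `Sum.inl x`). -/
def lowPt {W : Type*} : W ⊕ W → W := Sum.elim id id

namespace ReconSetup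

variable {V W : Type*}

/-- ancestor order of the forest `T_{E̅}` obtained by deleting transfer edges. -/
def fanc (R : ReconSetup V W) (x y : V) : Prop :=
  ∃ k, (R.T.par)^[k] x = y ∧ ∀ i < k, (R.T.par)^[i] x ∉ R.trans

def sfanc (R : ReconSetup V W) (x y : V) : Prop := R.fanc x y ∧ x ≠ y

/-- `σ_{T̅}(u)`: the species of the leaves of `T` below `u` in the forest `T_{E̅}`. -/
def sigmaBar (R : ReconSetup V W) (u : V) : Set W :=
  R.sig '' {l | R.T.IsLeaf l ∧ R.fanc l u}

/-- Ancestor order of `S` extended to vertices and edges: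
`z ⪯ (x,y) ↔ z ⪯ y`, `(x,y) ⪯ z ↔ x ⪯ z`, `(x,y) ⪯ (a,b) ↔ y ⪯ b`. -/
def extLE (R : ReconSetup V W) : W ⊕ W → W ⊕ W → Prop
  | Sum.inl a, Sum.inl b => R.S.anc a b
  | Sum.inl a, Sum.inr y => R.S.anc a y
  | Sum.inr y, Sum.inl b => R.S.anc (R.S.par y) b
  | Sum.inr y, Sum.inr z => R.S.anc y z

def extLT (R : ReconSetup V W) (p q : W ⊕ W) : Prop := R.extLE p q ∧ ¬ R.extLE q p

def incomp (R : ReconSetup V W) (p q : W ⊕ W) : Prop := ¬ R.extLE p q ∧ ¬ R.extLE q p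

def IsDupHGT (R : ReconSetup V W) (u : V) : Prop :=
  R.t u = Event.dup ∨ R.t u = Event.hgt

/-- (M1) leaf constraint. -/
def M1 (R : ReconSetup V W) (μ : V → W ⊕ W) : Prop :=
  ∀ u, R.T.IsLeaf u → μ u = Sum.inl (R.sig u)

/-- (M2i) speciation vertices map to the lca of the species below them. -/
def M2i (R : ReconSetup V W) (μ : V → W ⊕ W) : Prop :=
  ∀ u, R.t u = Event.spec → μ u = Sum.inl (R.lca (R.sigmaBar u))

/-- (M2ii) duplication/HGT vertices map to edges of `S`. -/
def M2ii (R : ReconSetup V W) (μ : V → W ⊕ W) : Prop :=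
  ∀ u, R.IsDupHGT u → ∃ y, y ≠ R.S.root ∧ μ u = Sum.inr y

/-- (M2iii) the endpoints of a transfer edge receive incomparable images. -/
def M2iii (R : ReconSetup V W) (μ : V → W ⊕ W) : Prop :=
  ∀ v ∈ R.trans, R.incomp (μ (R.T.par v)) (μ v)

/-- (M3) ancestor constraint within components of `T_{E̅}`. -/
def M3 (R : ReconSetup V W) (μ : V → W ⊕ W) : Prop :=
  ∀ v w, R.sfanc v w →
    ((R.IsDupHGT v ∧ R.IsDupHGT w) → R.extLE (μ v) (μ w)) ∧
    (¬ (R.IsDupHGT v ∧ R.IsDupHGT w) → R.extLT (μ v) (μ w))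

/-- `μ` is a reconciliation map from `(T;t,σ)` to `S`. -/
def IsRecon (R : ReconSetup V W) (μ : V → W ⊕ W) : Prop :=
  R.M1 μ ∧ R.M2i μ ∧ R.M2ii μ ∧ R.M2iii μ ∧ R.M3 μ

/-- (O1) every internal vertex has at least two children. -/
def O1 (R : ReconSetup V W) : Prop :=
  ∀ v, ¬ R.T.IsLeaf v →
    ∃ a b, a ≠ b ∧ R.T.par a = v ∧ R.T.par b = v ∧ a ≠ v ∧ b ≠ v

/-- (O2) every HGT vertex has a transfer child edge and a non-transfer child edge. -/
def O2 (R : ReconSetup V W) : Prop :=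
  ∀ v, R.t v = Event.hgt →
    (∃ c, R.T.par c = v ∧ c ∈ R.trans) ∧ (∃ c, R.T.par c = v ∧ c ≠ v ∧ c ∉ R.trans)

/-- (Σ1) a speciation vertex has two children whose species sets are disjoint. -/
def Sigma1 (R : ReconSetup V W) : Prop :=
  ∀ x, R.t x = Event.spec →
    ∃ v w, v ≠ w ∧ R.T.par v = x ∧ R.T.par w = x ∧ v ≠ x ∧ w ≠ x ∧
      R.sigmaBar v ∩ R.sigmaBar w = ∅

/-- (Σ2) the species sets across a transfer edge are disjoint. -/
def Sigma2 (R : ReconSetup V W) : Prop :=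
  ∀ w ∈ R.trans, R.sigmaBar (R.T.par w) ∩ R.sigmaBar w = ∅

/-- the gene tree is binary. -/
def BinaryT (R : ReconSetup V W) : Prop :=
  ∀ v, ¬ R.T.IsLeaf v →
    ∃ a b, a ≠ b ∧ ∀ c, (R.T.par c = v ∧ c ≠ v) ↔ (c = a ∨ c = b)

/-- the species tree is binary. -/
def BinaryS (R : ReconSetup V W) : Prop :=
  ∀ v, ¬ R.S.IsLeaf v →
    ∃ a b, a ≠ b ∧ ∀ c, (R.S.par c = v ∧ c ≠ v) ↔ (c = a ∨ c = b)

/-- (C1) speciation vertices and leaves get the same time as their image. -/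
def C1 (R : ReconSetup V W) (μ : V → W ⊕ W) (τT : V → ℝ) (τS : W → ℝ) : Prop :=
  ∀ u x, (R.t u = Event.spec ∨ R.t u = Event.leaf) → μ u = Sum.inl x → τT u = τS x

/-- (C2) a vertex mapped into an edge `(x,y)` gets a time strictly between
the times of `x` and `y`. -/
def C2 (R : ReconSetup V W) (μ : V → W ⊕ W) (τT : V → ℝ) (τS : W → ℝ) : Prop :=
  ∀ u y, R.IsDupHGT u → μ u = Sum.inr y → τS (R.S.par y) < τT u ∧ τT u < τS y

/-- `μ` is a time-consistent reconciliation map. -/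
def TimeConsistent (R : ReconSetup V W) (μ : V → W ⊕ W) : Prop :=
  ∃ τT τS, R.T.IsTimeMap τT ∧ R.S.IsTimeMap τS ∧ R.C1 μ τT τS ∧ R.C2 μ τT τS

/-- (D1). -/
def D1 (R : ReconSetup V W) (μ : V → W ⊕ W) (τT : V → ℝ) (τS : W → ℝ) : Prop :=
  ∀ u x, μ u = Sum.inl x → τT u = τS x

/-- (D2). -/
def D2 (R : ReconSetup V W) (τT : V → ℝ) (τS : W → ℝ) : Prop :=
  ∀ u x, R.IsDupHGT u → R.S.anc x (R.lca (R.sigmaBar u)) → τT u < τS x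

/-- (D3), for a transfer edge `(T.par v, v)` with `v ∈ trans`. -/
def D3 (R : ReconSetup V W) (τT : V → ℝ) (τS : W → ℝ) : Prop :=
  ∀ v x, v ∈ R.trans →
    R.S.anc (R.lca (R.sigmaBar (R.T.par v) ∪ R.sigmaBar v)) x → τS x < τT (R.T.par v)

/-- The DTL-scenario axioms (I)-(IV) for a map `γ : V(T) → V(S)`. -/
def DTL (R : ReconSetup V W) (γ : V → W) : Prop :=
  (∀ u, R.T.IsLeaf u → γ u = R.sig u) ∧
  (∀ u v w, v ≠ w → R.T.par v = u → R.T.par w = u → v ≠ u → w ≠ u →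
    ((¬ R.S.sanc (γ u) (γ v) ∧ ¬ R.S.sanc (γ u) (γ w)) ∧
     (R.S.anc (γ v) (γ u) ∨ R.S.anc (γ w) (γ u)))) ∧
  (∀ v, v ≠ R.T.root →
    (v ∈ R.trans ↔ (¬ R.S.anc (γ (R.T.par v)) (γ v) ∧ ¬ R.S.anc (γ v) (γ (R.T.par v))))) ∧
  (∀ u v w, v ≠ w → R.T.par v = u → R.T.par w = u → v ≠ u → w ≠ u →
    ((R.t u = Event.hgt ↔ (v ∈ R.trans ∨ w ∈ R.trans)) ∧
     (R.t u = Event.spec →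
       γ u = R.lca {γ v, γ w} ∧ ¬ R.S.anc (γ v) (γ w) ∧ ¬ R.S.anc (γ w) (γ v)) ∧
     (R.t u = Event.dup → R.S.anc (R.lca {γ v, γ w}) (γ u))))

end ReconSetup

/-- A directed graph (relation) is acyclic: no edge closes a directed cycle. -/
def Acyclic {α : Type*} (r : α → α → Prop) : Prop :=
  ∀ x y, r x y → ¬ Relation.ReflTransGen r y x

namespace RTree

variable {V : Type*}

lemma anc_refl' (T : RTree V) (x : V) : T.anc x x := ⟨0, rfl⟩

lemma par_iterate_root' (T : RTree V) (k : ℕ) : T.par^[k] T.root = T.root := by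
  induction k with
  | zero => rfl
  | succ n ih => rw [Function.iterate_succ_apply', ih, T.par_root]

lemma anc_antisymm' (T : RTree V) {x y : V} (h1 : T.anc x y) (h2 : T.anc y x) : x = y := by
  obtain ⟨k, hk⟩ := h1
  obtain ⟨j, hj⟩ := h2
  rcases Nat.eq_zero_or_pos k with h0 | hpos
  · subst h0; simpa using hk
  have hcyc : T.par^[j + k] x = x := by
    rw [Function.iterate_add_apply, hk, hj]
  have hm : ∀ m : ℕ, T.par^[m * (j + k)] x = x := by
    intro m
    induction m with
    | zero => simp
    | succ n ih =>
      rw [Nat.succ_mul, Function.iterate_add_apply, hcyc, ih]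
  obtain ⟨N, hN⟩ := T.reaches x
  have hle : N ≤ N * (j + k) := Nat.le_mul_of_pos_right N (by omega)
  have hxr : x = T.root := by
    have : T.par^[N * (j + k)] x = x := hm N
    rw [show N * (j + k) = (N * (j + k) - N) + N by omega,
      Function.iterate_add_apply, hN, par_iterate_root'] at this
    exact this.symm
  subst hxr
  rw [par_iterate_root'] at hk
  exact hk

end RTree

namespace ReconSetup

variable {V W : Type*}

lemma fanc_refl (R : ReconSetup V W) (u : V) : R.fanc u u :=
  ⟨0, rfl, fun i hi => absurd hi (Nat.not_lt_zero i)⟩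

lemma fanc_anc (R : ReconSetup V W) {a b : V} (h : R.fanc a b) : R.T.anc a b := by
  obtain ⟨k, hk, -⟩ := h; exact ⟨k, hk⟩

lemma fanc_child (R : ReconSetup V W) {c u : V} (h : R.T.par c = u) (hc : c ∉ R.trans) :
    R.fanc c u := by
  refine ⟨1, by simpa using h, ?_⟩
  intro i hi
  interval_cases i
  simpa using hc

lemma fanc_trans (R : ReconSetup V W) {a b c : V} (h1 : R.fanc a b) (h2 : R.fanc b c) :
    R.fanc a c := by
  obtain ⟨k, hk, hk'⟩ := h1
  obtain ⟨j, hj, hj'⟩ := h2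
  refine ⟨j + k, ?_, ?_⟩
  · rw [Function.iterate_add_apply, hk, hj]
  · intro i hi
    by_cases h : i < k
    · exact hk' i h
    · push_neg at h
      have heq : R.T.par^[i] a = R.T.par^[i - k] b := by
        rw [← hk, ← Function.iterate_add_apply]
        congr 1
        omega
      rw [heq]
      exact hj' _ (by omega)

lemma nontrans_child (R : ReconSetup V W) (hO2 : R.O2) (u : V) (h : ¬ R.T.IsLeaf u) :
    ∃ c, R.T.par c = u ∧ c ≠ u ∧ c ∉ R.trans := by
  by_cases hh : R.t u = Event.hgt
  · exact (hO2 u hh).2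
  · unfold RTree.IsLeaf at h
    push_neg at h
    obtain ⟨c, hc1, hc2⟩ := h
    refine ⟨c, hc1, hc2, fun hmem => hh ?_⟩
    have := R.trans_hgt c hmem
    rwa [hc1] at this

/-- the strict forest-descendants of `u`, as a finset. -/
noncomputable def descSet [Fintype V] (R : ReconSetup V W) (u : V) : Finset V :=
  @Finset.filter _ (fun v => R.sfanc v u) (Classical.decPred _) Finset.univ

lemma mem_descSet [Fintype V] (R : ReconSetup V W) {v u : V} :
    v ∈ R.descSet u ↔ R.sfanc v u := by
  simp [descSet, Finset.mem_filter]

lemma exists_leaf_below_aux [Fintype V] (R : ReconSetup V W) (hO2 : R.O2) :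
    ∀ n : ℕ, ∀ u : V, (R.descSet u).card ≤ n → ∃ l, R.T.IsLeaf l ∧ R.fanc l u := by
  intro n
  induction n with
  | zero =>
    intro u hcard
    by_cases hleaf : R.T.IsLeaf u
    · exact ⟨u, hleaf, R.fanc_refl u⟩
    · exfalso
      obtain ⟨c, hc1, hc2, hc3⟩ := R.nontrans_child hO2 u hleaf
      have hmem : c ∈ R.descSet u := R.mem_descSet.2 ⟨R.fanc_child hc1 hc3, hc2⟩
      have : (R.descSet u).card = 0 := Nat.le_zero.1 hcard
      rw [Finset.card_eq_zero] at this
      simp [this] at hmem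
  | succ n ih =>
    intro u hcard
    by_cases hleaf : R.T.IsLeaf u
    · exact ⟨u, hleaf, R.fanc_refl u⟩
    · obtain ⟨c, hc1, hc2, hc3⟩ := R.nontrans_child hO2 u hleaf
      have hcu : R.fanc c u := R.fanc_child hc1 hc3
      have hsub : R.descSet c ⊆ R.descSet u := by
        intro v hv
        obtain ⟨hvc, hvne⟩ := R.mem_descSet.1 hv
        refine R.mem_descSet.2 ⟨R.fanc_trans hvc hcu, ?_⟩
        rintro rfl
        exact hc2 (R.T.anc_antisymm' (R.fanc_anc hcu) (R.fanc_anc hvc))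
      have hss : R.descSet c ⊂ R.descSet u := by
        refine Finset.ssubset_iff_of_subset hsub |>.2 ⟨c, ?_, ?_⟩
        · exact R.mem_descSet.2 ⟨hcu, hc2⟩
        · intro hmem
          exact (R.mem_descSet.1 hmem).2 rfl
      have hlt : (R.descSet c).card < (R.descSet u).card := Finset.card_lt_card hss
      obtain ⟨l, hl, hlc⟩ := ih c (by omega)
      exact ⟨l, hl, R.fanc_trans hlc hcu⟩

lemma exists_leaf_below [Fintype V] (R : ReconSetup V W) (hO2 : R.O2) (u : V) :
    ∃ l, R.T.IsLeaf l ∧ R.fanc l u :=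
  R.exists_leaf_below_aux hO2 (R.descSet u).card u le_rfl

end ReconSetup

/-- if `μ` satisfies (M1) and (M3), then
`μ(u) ⪰_S lca_S(σ_{T̅}(u))` for every vertex `u` of the gene tree. -/
theorem stmt2 {V W : Type*} [Fintype V] (R : ReconSetup V W) (μ : V → W ⊕ W)
    (hM1 : R.M1 μ) (hM3 : R.M3 μ) (hO2 : R.O2) :
    ∀ u, R.extLE (Sum.inl (R.lca (R.sigmaBar u))) (μ u) := by
  intro u
  obtain ⟨l, hl, hfl⟩ := R.exists_leaf_below hO2 u
  have hne : (R.sigmaBar u).Nonempty := ⟨R.sig l, ⟨l, ⟨hl, hfl⟩, rfl⟩⟩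
  obtain ⟨hub, hmin⟩ := R.lca_spec _ hne
  have key : ∀ a ∈ R.sigmaBar u, R.extLE (Sum.inl a) (μ u) := by
    rintro a ⟨l', ⟨hl', hfl'⟩, rfl⟩
    have hμl : μ l' = Sum.inl (R.sig l') := hM1 l' hl'
    by_cases heq : l' = u
    · subst heq
      rw [hμl]
      exact R.S.anc_refl' _
    · have hsf : R.sfanc l' u := ⟨hfl', heq⟩
      have h3 := hM3 l' u hsf
      by_cases hd : R.IsDupHGT l' ∧ R.IsDupHGT u
      · have h := h3.1 hd; rw [hμl] at h; exact h
      · have h := (h3.2 hd).1; rw [hμl] at h; exact h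
  cases hμ : μ u with
  | inl b =>
    refine hmin b ?_
    intro a ha
    have h := key a ha
    rw [hμ] at h
    exact h
  | inr y =>
    refine hmin y ?_
    intro a ha
    have h := key a ha
    rw [hμ] at h
    exact h
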